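/- Let w assign a nonnegative integer w(e) to every unordered pair e of distinct vertices of V, and let each agent i have the linear centrality C_i(g) = C_w(i,g) = Σ_{e ∈ E(g), i ∈ e} w(e). Then for every choice of thresholds (θ_i), θ_i ∈ ℝ, the truncated linear centrality game with thresholds (θ_i) has at least one APSN. -/

import Mathlib

open SimpleGraph

/-- Degree of vertex `i` in network `g`. -/
noncomputable def deg {V : Type*} (g : SimpleGraph V) (i : V) : ℕ :=
  Nat.card (g.neighborSet i)

/-- The network `g` with the (missing) edge `ij` added. -/
def addE {V : Type*} (g : SimpleGraph V) (i j : V) : SimpleGraph V :=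
  g ⊔ SimpleGraph.fromEdgeSet {s(i, j)}

/-- The network `g` with the edge `ij` removed. -/
def delE {V : Type*} (g : SimpleGraph V) (i j : V) : SimpleGraph V :=
  g.deleteEdges {s(i, j)}

/-- Utility of agent `i` in the game with centralities `C` and edge cost `c`. -/
noncomputable def util {V : Type*} (C : V → SimpleGraph V → ℝ) (c : ℝ) (i : V)
    (g : SimpleGraph V) : ℝ :=
  C i g - c * (deg g i)

/-- Adding the missing edge `ij` is an improving move. -/
def ImprovingAdd {V : Type*} (C : V → SimpleGraph V → ℝ) (c : ℝ) (g : SimpleGraph V)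
    (i j : V) : Prop :=
  util C c i (addE g i j) ≥ util C c i g ∧ util C c j (addE g i j) ≥ util C c j g ∧
    (util C c i (addE g i j) > util C c i g ∨ util C c j (addE g i j) > util C c j g)

/-- Deleting the edge `ij` is an improving move. -/
def ImprovingDel {V : Type*} (C : V → SimpleGraph V → ℝ) (c : ℝ) (g : SimpleGraph V)
    (i j : V) : Prop :=
  util C c i (delE g i j) > util C c i g ∨ util C c j (delE g i j) > util C c j g

/-- `g` is pairwise stable at edge cost `c`. -/
def PairwiseStable {V : Type*} (C : V → SimpleGraph V → ℝ) (c : ℝ) (g : SimpleGraph V) : Prop :=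
  (∀ i j : V, i ≠ j → ¬ g.Adj i j → ¬ ImprovingAdd C c g i j) ∧
  (∀ i j : V, g.Adj i j → ¬ ImprovingDel C c g i j)

/-- `g` is asymptotically pairwise stable. -/
def APSN {V : Type*} (C : V → SimpleGraph V → ℝ) (g : SimpleGraph V) : Prop :=
  ∃ ε₀ : ℝ, 0 < ε₀ ∧ ∀ c : ℝ, 0 < c → c < ε₀ → PairwiseStable C c g

/-- Axiom 1: the centrality of agent `i` is increasing. -/
def Axiom1 {V : Type*} (C : V → SimpleGraph V → ℝ) (i : V) : Prop :=
  ∀ (g : SimpleGraph V) (j : V), j ≠ i → ¬ g.Adj i j → C i (addE g i j) > C i g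

/-- Axiom 1′: the centrality of agent `i` is decreasing. -/
def Axiom1' {V : Type*} (C : V → SimpleGraph V → ℝ) (i : V) : Prop :=
  ∀ (g : SimpleGraph V) (j : V), j ≠ i → ¬ g.Adj i j → C i (addE g i j) < C i g

/-- Axiom 2: the centrality of agent `i` is componentwise. -/
def Axiom2 {V : Type*} (C : V → SimpleGraph V → ℝ) (i : V) : Prop :=
  ∀ (g : SimpleGraph V) (j : V), j ≠ i → ¬ g.Adj i j →
    ((g.Reachable i j → C i (addE g i j) > C i g) ∧
     (¬ g.Reachable i j → C i (addE g i j) ≤ C i g))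

/-- Axiom 2′: the centrality of agent `i` is peripheral. -/
def Axiom2' {V : Type*} (C : V → SimpleGraph V → ℝ) (i : V) : Prop :=
  ∀ (g : SimpleGraph V) (j : V), j ≠ i → ¬ g.Adj i j →
    ((g.Reachable i j → C i (addE g i j) ≤ C i g) ∧
     (¬ g.Reachable i j → C i (addE g i j) > C i g))

/-- The centrality of agent `i` is degree homophilic with (strictly increasing) `f`. -/
def DegreeHomophilic {V : Type*} (C : V → SimpleGraph V → ℝ) (i : V) (f : ℕ → ℤ) : Prop :=
  ∀ (g : SimpleGraph V) (j : V), j ≠ i → ¬ g.Adj i j →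
    (C i (addE g i j) > C i g ↔ (deg g j : ℤ) ≤ f (deg g i))

open scoped Classical in
/-- The linear centrality of `i` in `g` with weights `w` on unordered pairs:
`∑_{e ∈ E(g), i ∈ e} w(e)`. -/
noncomputable def Clin {V : Type*} [Fintype V] (w : Sym2 V → ℕ) (i : V)
    (g : SimpleGraph V) : ℝ :=
  ∑ j : V, if g.Adj i j then (w s(i, j) : ℝ) else 0

/-!
Scan the pairs of agents by decreasing weight and link a pair whenever it has positive weight
and both ends are still strictly below their thresholds. Since each new link is at most as heavy
as the earlier links at its ends, every link stays needed at both ends: removing it leaves the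
end strictly below its threshold, a loss of truncated centrality that does not depend on `c`.
Every missing pair of positive weight has an end already at its threshold, which would only pay
for the link. So once `c` is below the least loss caused by a deletion, no move improves.
-/

section Network

variable {V : Type*} {g : SimpleGraph V} {i j k : V}

lemma addE_comm (g : SimpleGraph V) (i j : V) : addE g i j = addE g j i := by
  rw [addE, addE, Sym2.eq_swap]

lemma delE_comm (g : SimpleGraph V) (i j : V) : delE g i j = delE g j i := by
  rw [delE, delE, Sym2.eq_swap]

lemma le_addE (g : SimpleGraph V) (i j : V) : g ≤ addE g i j := le_sup_left

lemma edgeSet_addE_subset (g : SimpleGraph V) (i j : V) :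
    (addE g i j).edgeSet ⊆ insert s(i, j) g.edgeSet := by
  rw [addE, edgeSet_sup, edgeSet_fromEdgeSet, Set.union_comm]
  exact Set.union_subset_union (Set.sdiff_subset.trans (Set.singleton_subset_iff.2 rfl)) le_rfl

lemma addE_adj_left (hij : i ≠ j) : (addE g i j).Adj i k ↔ g.Adj i k ∨ k = j := by
  by_cases hk : k = j
  · subst hk; simp [addE, hij]
  · simp [addE, hk, hij]

lemma addE_delE (h : g.Adj i j) : addE (delE g i j) i j = g := by
  ext a b
  simp only [addE, delE, sup_adj, deleteEdges_adj, fromEdgeSet_adj, Set.mem_singleton_iff]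
  constructor
  · rintro (⟨hab, -⟩ | ⟨he, -⟩)
    · exact hab
    · exact (adj_congr_of_sym2 g he).2 h
  · intro hab
    by_cases he : s(a, b) = s(i, j)
    · exact Or.inr ⟨he, hab.ne⟩
    · exact Or.inl ⟨hab, he⟩

lemma not_delE_adj (g : SimpleGraph V) (i j : V) : ¬ (delE g i j).Adj i j := by
  simp [delE]

lemma neighborSet_addE (hij : i ≠ j) :
    (addE g i j).neighborSet i = insert j (g.neighborSet i) := by
  ext k
  simp [addE_adj_left hij, or_comm]

lemma deg_addE [Finite V] (hij : i ≠ j) (hna : ¬ g.Adj i j) :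
    deg (addE g i j) i = deg g i + 1 := by
  rw [deg, deg, neighborSet_addE hij, Nat.card_coe_set_eq, Nat.card_coe_set_eq,
    Set.ncard_insert_of_notMem (show j ∉ g.neighborSet i from hna)]

lemma deg_delE [Finite V] (h : g.Adj i j) : deg (delE g i j) i + 1 = deg g i := by
  conv_rhs => rw [← addE_delE h]
  rw [deg_addE h.ne (not_delE_adj g i j)]

end Network

section LinearCentrality

variable {V : Type*} [Fintype V] (w : Sym2 V → ℕ) {g g' : SimpleGraph V} {i j k : V}

lemma Clin_mono (h : g ≤ g') (k : V) : Clin w k g ≤ Clin w k g' := by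
  unfold Clin
  gcongr with l
  split_ifs with h₁ h₂
  exacts [le_rfl, absurd (h h₁) h₂, by positivity, le_rfl]

lemma Clin_addE (hij : i ≠ j) (hna : ¬ g.Adj i j) :
    Clin w i (addE g i j) = Clin w i g + w s(i, j) := by
  classical
  have split : ∀ l, (if (addE g i j).Adj i l then (w s(i, l) : ℝ) else 0) =
      (if g.Adj i l then (w s(i, l) : ℝ) else 0) + if l = j then (w s(i, l) : ℝ) else 0 := by
    intro l
    by_cases hl : l = j
    · subst hl; simp [addE_adj_left hij, hna]
    · simp [addE_adj_left hij, hl]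
  simp only [Clin, split, Finset.sum_add_distrib, Finset.sum_ite_eq', Finset.mem_univ, if_true]

lemma Clin_addE_of_mem (hij : i ≠ j) (hna : ¬ g.Adj i j) (hk : k ∈ s(i, j)) :
    Clin w k (addE g i j) = Clin w k g + w s(i, j) := by
  rcases Sym2.mem_iff.1 hk with rfl | rfl
  · exact Clin_addE w hij hna
  · rw [addE_comm, Sym2.eq_swap]
    exact Clin_addE w hij.symm fun h => hna h.symm

lemma Clin_addE_of_notMem (hk : k ∉ s(i, j)) : Clin w k (addE g i j) = Clin w k g := by
  classical
  refine Finset.sum_congr rfl fun l _ => if_congr ?_ rfl rfl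
  simp only [Sym2.mem_iff, not_or] at hk
  simp [addE, hk.1, hk.2]

lemma Clin_delE (h : g.Adj i j) : Clin w i (delE g i j) + w s(i, j) = Clin w i g := by
  conv_rhs => rw [← addE_delE h]
  rw [Clin_addE w h.ne (not_delE_adj g i j)]

end LinearCentrality

section Stability

open Filter Topology

variable {V : Type*} {C : V → SimpleGraph V → ℝ} {c : ℝ} {g : SimpleGraph V} {i j : V}

lemma util_addE_lt [Finite V] (hc : 0 < c) (hij : i ≠ j) (hna : ¬ g.Adj i j)
    (hC : C i (addE g i j) ≤ C i g) : util C c i (addE g i j) < util C c i g := by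
  rw [util, util, deg_addE hij hna]
  push_cast
  linarith

lemma util_delE_le [Finite V] (h : g.Adj i j) (hc : c ≤ C i g - C i (delE g i j)) :
    util C c i (delE g i j) ≤ util C c i g := by
  rw [util, util, ← deg_delE h]
  push_cast
  linarith

lemma pairwiseStable_of_addE_le_of_delE_le [Finite V] (hc : 0 < c)
    (hadd : ∀ i j, i ≠ j → ¬ g.Adj i j → C i (addE g i j) ≤ C i g ∨ C j (addE g i j) ≤ C j g)
    (hdel : ∀ i j, g.Adj i j → c ≤ C i g - C i (delE g i j)) : PairwiseStable C c g := by
  refine ⟨fun i j hij hna ⟨hi, hj, _⟩ => ?_, fun i j h hdel' => ?_⟩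
  · rcases hadd i j hij hna with hC | hC
    · exact (util_addE_lt hc hij hna hC).not_ge hi
    · rw [addE_comm] at hC hj
      exact (util_addE_lt hc hij.symm (fun h => hna h.symm) hC).not_ge hj
  · rcases hdel' with hi | hj
    · exact (util_delE_le h (hdel i j h)).not_gt hi
    · rw [delE_comm] at hj
      exact (util_delE_le h.symm (hdel j i h.symm)).not_gt hj

lemma APSN_of_eventually (h : ∀ᶠ c in 𝓝[>] (0 : ℝ), PairwiseStable C c g) : APSN C g := by
  obtain ⟨ε, hε, hstable⟩ := (nhdsGT_basis (0 : ℝ)).eventually_iff.1 h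
  exact ⟨ε, hε, fun c hc hcε => hstable ⟨hc, hcε⟩⟩

theorem APSN_of_addE_le_of_delE_lt [Finite V]
    (hadd : ∀ i j, i ≠ j → ¬ g.Adj i j → C i (addE g i j) ≤ C i g ∨ C j (addE g i j) ≤ C j g)
    (hdel : ∀ i j, g.Adj i j → C i (delE g i j) < C i g) : APSN C g := by
  have hsmall : ∀ᶠ c in 𝓝[>] (0 : ℝ), ∀ i j, g.Adj i j → c ≤ C i g - C i (delE g i j) := by
    simp only [eventually_all]
    exact fun i j h => nhdsWithin_le_nhds (eventually_le_nhds (sub_pos.2 (hdel i j h)))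
  apply APSN_of_eventually
  filter_upwards [self_mem_nhdsWithin, hsmall] with c hc hsmall
  exact pairwiseStable_of_addE_le_of_delE_le hc hadd hsmall

end Stability

section Greedy

variable {V : Type*} [Fintype V] (w : Sym2 V → ℕ) (θ : V → ℝ)

/-- The invariant of scanning `S` by decreasing weight and linking a pair of positive weight
whenever both its ends are strictly below their thresholds. -/
structure IsGreedyOn (S : Set (Sym2 V)) (g : SimpleGraph V) : Prop where
  edgeSet_subset : g.edgeSet ⊆ S
  weight_pos : ∀ e ∈ g.edgeSet, 0 < w e
  lt_add_weight : ∀ e ∈ g.edgeSet, ∀ k ∈ e, Clin w k g < θ k + w e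
  exists_le_Clin : ∀ e ∈ S, ¬ e.IsDiag → 0 < w e → e ∉ g.edgeSet → ∃ k ∈ e, θ k ≤ Clin w k g

variable {w θ} {S : Set (Sym2 V)} {g : SimpleGraph V}

lemma isGreedyOn_empty : IsGreedyOn w θ ∅ ⊥ where
  edgeSet_subset := by simp
  weight_pos := by simp
  lt_add_weight := by simp
  exists_le_Clin := by simp

lemma IsGreedyOn.insert_of_not_lt (hg : IsGreedyOn w θ S g) {a : Sym2 V}
    (ha : ¬ (¬ a.IsDiag ∧ 0 < w a ∧ ∀ k ∈ a, Clin w k g < θ k)) :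
    IsGreedyOn w θ (insert a S) g where
  edgeSet_subset := hg.edgeSet_subset.trans (Set.subset_insert a S)
  weight_pos := hg.weight_pos
  lt_add_weight := hg.lt_add_weight
  exists_le_Clin e he hd hw hna := by
    rcases he with rfl | he
    · by_contra! hlt
      exact ha ⟨hd, hw, hlt⟩
    · exact hg.exists_le_Clin e he hd hw hna

lemma IsGreedyOn.insert_addE (hg : IsGreedyOn w θ S g) {i j : V} (hS : s(i, j) ∉ S)
    (hmin : ∀ e ∈ S, w s(i, j) ≤ w e) (hij : i ≠ j) (hw : 0 < w s(i, j))
    (hlt : ∀ k ∈ s(i, j), Clin w k g < θ k) :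
    IsGreedyOn w θ (insert s(i, j) S) (addE g i j) := by
  have hna : ¬ g.Adj i j := fun h => hS (hg.edgeSet_subset h)
  have hmem : s(i, j) ∈ (addE g i j).edgeSet := (addE_adj_left hij).2 (Or.inr rfl)
  refine ⟨(edgeSet_addE_subset g i j).trans (Set.insert_subset_insert hg.edgeSet_subset),
    fun e he => ?_, fun e he k hk => ?_, fun e he hd hwe hna' => ?_⟩
  · rcases edgeSet_addE_subset g i j he with rfl | he
    exacts [hw, hg.weight_pos e he]
  · by_cases hki : k ∈ s(i, j)
    · rw [Clin_addE_of_mem w hij hna hki]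
      have hk := hlt k hki
      rcases edgeSet_addE_subset g i j he with rfl | he
      · linarith
      · have hle : (w s(i, j) : ℝ) ≤ w e := by exact_mod_cast hmin e (hg.edgeSet_subset he)
        linarith
    · rcases edgeSet_addE_subset g i j he with rfl | he
      · exact absurd hk hki
      · rw [Clin_addE_of_notMem w hki]
        exact hg.lt_add_weight e he k hk
  · rcases he with rfl | he
    · exact absurd hmem hna'
    · obtain ⟨k, hk, hθ⟩ :=
        hg.exists_le_Clin e he hd hwe fun h => hna' (edgeSet_mono (le_addE g i j) h)
      exact ⟨k, hk, hθ.trans (Clin_mono w (le_addE g i j) k)⟩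

variable (w θ) in
theorem exists_isGreedyOn (S : Finset (Sym2 V)) : ∃ g, IsGreedyOn w θ S g := by
  classical
  induction S using Finset.induction_on_min_value w with
  | empty => exact ⟨⊥, by simpa using isGreedyOn_empty⟩
  | insert a S haS hmin ih =>
    obtain ⟨g, hg⟩ := ih
    rw [Finset.coe_insert]
    induction a using Sym2.ind with | h i j => ?_
    by_cases ha : ¬ s(i, j).IsDiag ∧ 0 < w s(i, j) ∧ ∀ k ∈ s(i, j), Clin w k g < θ k
    · obtain ⟨hd, hw, hlt⟩ := ha
      exact ⟨_, hg.insert_addE haS hmin (fun h => hd (Sym2.mk_isDiag_iff.2 h)) hw hlt⟩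
    · exact ⟨g, hg.insert_of_not_lt ha⟩

end Greedy

section Truncated

variable {V : Type*} [Fintype V] {w : Sym2 V → ℕ} {θ : V → ℝ} {S : Set (Sym2 V)}
  {g : SimpleGraph V} {i j : V}

lemma IsGreedyOn.min_Clin_addE_le (hg : IsGreedyOn w θ Set.univ g) (hij : i ≠ j)
    (hna : ¬ g.Adj i j) :
    min (Clin w i (addE g i j)) (θ i) ≤ min (Clin w i g) (θ i) ∨
      min (Clin w j (addE g i j)) (θ j) ≤ min (Clin w j g) (θ j) := by
  rcases (w s(i, j)).eq_zero_or_pos with hw | hw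
  · left
    rw [Clin_addE w hij hna, hw, Nat.cast_zero, add_zero]
  · obtain ⟨k, hk, hθ⟩ :=
      hg.exists_le_Clin _ (Set.mem_univ _) (Sym2.mk_isDiag_iff.not.2 hij) hw hna
    have hk_le : min (Clin w k (addE g i j)) (θ k) ≤ min (Clin w k g) (θ k) := by
      rw [min_eq_right hθ]
      exact min_le_right _ _
    rcases Sym2.mem_iff.1 hk with rfl | rfl
    exacts [Or.inl hk_le, Or.inr hk_le]

lemma IsGreedyOn.min_Clin_delE_lt (hg : IsGreedyOn w θ S g) (h : g.Adj i j) :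
    min (Clin w i (delE g i j)) (θ i) < min (Clin w i g) (θ i) := by
  have hdel := Clin_delE w h
  have hw : (0 : ℝ) < w s(i, j) := by exact_mod_cast hg.weight_pos _ h
  have hlt := hg.lt_add_weight _ h i (Sym2.mem_mk_left i j)
  exact (min_le_left _ _).trans_lt (lt_min (by linarith) (by linarith))

end Truncated

theorem statement_15 {V : Type*} [Fintype V] (w : Sym2 V → ℕ) (θ : V → ℝ) :
    ∃ g : SimpleGraph V, APSN (fun i h => min (Clin w i h) (θ i)) g := by
  obtain ⟨g, hg⟩ := exists_isGreedyOn w θ Finset.univ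
  rw [Finset.coe_univ] at hg
  exact ⟨g, APSN_of_addE_le_of_delE_lt (fun _ _ => hg.min_Clin_addE_le)
    (fun _ _ => hg.min_Clin_delE_lt)⟩
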